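/- Let X_1, X_2, … be mutually independent random variables such that X_n is exponentially distributed with rate λ_n > 0, where the sequence (λ_n) is increasing in n, and let N(t) = sup{n ≥ 0 : X_1 + ⋯ + X_n ≤ t} be the associated counting process (a pure birth process with rates λ_n). If T is a DFR nonnegative random time independent of the process, then N(T) is d-DFR. -/

import Mathlib

/-!
Write `H s = P(T ≥ s)` and `S k` for the `k`-th arrival time. As `T` is independent of the
arrivals, `P(N(T) ≥ k) = E[H(S k)]`, and the DFR property makes `H` log-convex on `[0, ∞)`:
`H(s+x) H(s+y) ≤ H(s) H(s+x+y)`. Let `A s = E[H(s + X n)]` and `C s = E[H(s + X n + X (n+1))]`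
with `X n`, `X (n+1)` independent. Since `X (n+1)` has the law of `(λₙ/λₙ₊₁) X n` and
`λₙ ≤ λₙ₊₁`, we get `A s ≤ E[H(s + X (n+1))]`, so log-convexity gives `A(s)² ≤ H(s) C(s)`.
Conditioning on `S n` and Cauchy–Schwarz turn this into
`E[A(S n)]² ≤ E[H(S n)] E[C(S n)]`, i.e. `P(N(T) ≥ n+1)² ≤ P(N(T) ≥ n) P(N(T) ≥ n+2)`.
-/

open MeasureTheory ProbabilityTheory

variable {Ω : Type*} [MeasurableSpace Ω]

/-- Survival function of a random variable `T`: `F̄_T(t) = P(T > t)`. -/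
noncomputable def surv (μ : Measure Ω) (T : Ω → ℝ) (t : ℝ) : ℝ :=
  (μ {ω | t < T ω}).toReal

/-- `T` has the decreasing failure rate (DFR) property:
`F̄_T(s+z)·F̄_T(t) ≤ F̄_T(t+z)·F̄_T(s)` for all `0 ≤ s ≤ t` and `z ≥ 0`
(log-convexity of the survival function on `[0,∞)`). -/
def IsDFR (μ : Measure Ω) (T : Ω → ℝ) : Prop :=
  ∀ s t z : ℝ, 0 ≤ s → s ≤ t → 0 ≤ z →
    μ {ω | s + z < T ω} * μ {ω | t < T ω} ≤ μ {ω | t + z < T ω} * μ {ω | s < T ω}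

/-- Arrival times: `S n = X 1 + ⋯ + X n` (with 0-based indexing of the
interarrival times, `X i` is the `(i+1)`-st interarrival time), `S 0 = 0`. -/
noncomputable def arr (X : ℕ → Ω → ℝ) (n : ℕ) (ω : Ω) : ℝ :=
  ∑ i ∈ Finset.range n, X i ω

/-- The counting process `N(t) = sup {n ≥ 0 : S n ≤ t}` (valued in `ℕ∞`,
allowing infinitely many arrivals). -/
noncomputable def countN (X : ℕ → Ω → ℝ) (t : ℝ) (ω : Ω) : ℕ∞ :=
  sSup ((fun n : ℕ => (n : ℕ∞)) '' {n : ℕ | arr X n ω ≤ t})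

/-- A (possibly defective) `ℕ∞`-valued random variable `M` is discrete DFR:
`P(M ≥ n+1)² ≤ P(M ≥ n)·P(M ≥ n+2)` for all `n`. -/
def IsdDFR (μ : Measure Ω) (M : Ω → ℕ∞) : Prop :=
  ∀ n : ℕ,
    μ {ω | (n : ℕ∞) + 1 ≤ M ω} ^ 2 ≤
      μ {ω | (n : ℕ∞) ≤ M ω} * μ {ω | (n : ℕ∞) + 2 ≤ M ω}

open Filter Topology
open scoped ENNReal

theorem lintegral_sq_le_mul_of_sq_le {α : Type*} [MeasurableSpace α] {μ : Measure α}
    {f g h : α → ℝ≥0∞} (hg : AEMeasurable g μ) (hh : AEMeasurable h μ)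
    (hfgh : ∀ᵐ x ∂μ, f x ^ 2 ≤ g x * h x) :
    (∫⁻ x, f x ∂μ) ^ 2 ≤ (∫⁻ x, g x ∂μ) * ∫⁻ x, h x ∂μ := by
  have rpow_half_sq : ∀ r : ℝ≥0∞, (r ^ (2⁻¹ : ℝ)) ^ 2 = r := fun r => by
    rw [← ENNReal.rpow_natCast, ← ENNReal.rpow_mul]; norm_num
  have hf : ∀ᵐ x ∂μ, f x ≤ g x ^ (2⁻¹ : ℝ) * h x ^ (2⁻¹ : ℝ) := by
    filter_upwards [hfgh] with x hx
    rw [← ENNReal.mul_rpow_of_nonneg _ _ (by norm_num),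
      ← ENNReal.pow_rpow_inv_natCast two_ne_zero (f x)]
    exact ENNReal.rpow_le_rpow (by exact_mod_cast hx) (by norm_num)
  have holder := ENNReal.lintegral_mul_le_Lp_mul_Lq μ Real.HolderConjugate.two_two
    (hg.pow_const (2⁻¹ : ℝ)) (hh.pow_const (2⁻¹ : ℝ))
  simp only [Pi.mul_apply, ENNReal.rpow_two, rpow_half_sq, one_div] at holder
  calc (∫⁻ x, f x ∂μ) ^ 2
      ≤ ((∫⁻ x, g x ∂μ) ^ (2⁻¹ : ℝ) * (∫⁻ x, h x ∂μ) ^ (2⁻¹ : ℝ)) ^ 2 :=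
        pow_le_pow_left' ((lintegral_mono_ae hf).trans holder) 2
    _ = (∫⁻ x, g x ∂μ) * ∫⁻ x, h x ∂μ := by rw [mul_pow, rpow_half_sq, rpow_half_sq]

theorem ProbabilityTheory.IndepFun.lintegral_comp_eq_lintegral_lintegral
    {Ω β γ : Type*} [MeasurableSpace Ω] [MeasurableSpace β] [MeasurableSpace γ]
    {μ : Measure Ω} [IsFiniteMeasure μ] {Y : Ω → β} {Z : Ω → γ} (hYZ : IndepFun Y Z μ)
    (hY : Measurable Y) (hZ : Measurable Z) {f : β → γ → ℝ≥0∞}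
    (hf : Measurable (Function.uncurry f)) :
    ∫⁻ ω, f (Y ω) (Z ω) ∂μ = ∫⁻ ω, ∫⁻ ω', f (Y ω) (Z ω') ∂μ ∂μ := by
  rw [indepFun_iff_map_prod_eq_prod_map_map hY.aemeasurable hZ.aemeasurable] at hYZ
  calc ∫⁻ ω, f (Y ω) (Z ω) ∂μ
      = ∫⁻ p, Function.uncurry f p ∂(μ.map fun ω => (Y ω, Z ω)) :=
        (lintegral_map hf (hY.prodMk hZ)).symm
    _ = ∫⁻ y, ∫⁻ z, f y z ∂(μ.map Z) ∂(μ.map Y) := by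
        rw [hYZ, lintegral_prod _ hf.aemeasurable]; rfl
    _ = ∫⁻ ω, ∫⁻ ω', f (Y ω) (Z ω') ∂μ ∂μ := by
        rw [lintegral_map (hf.lintegral_prod_right) hY]
        refine lintegral_congr fun ω => lintegral_map ?_ hZ
        exact hf.comp (measurable_const.prodMk measurable_id)

theorem ProbabilityTheory.IndepFun.measure_le_eq_lintegral
    {Ω : Type*} [MeasurableSpace Ω] {μ : Measure Ω} [IsFiniteMeasure μ] {S T : Ω → ℝ}
    (hST : IndepFun S T μ) (hS : Measurable S) (hT : Measurable T) :
    μ {ω | S ω ≤ T ω} = ∫⁻ ω, μ {ω' | S ω ≤ T ω'} ∂μ := by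
  have hf : Measurable
      (Function.uncurry fun s t : ℝ => (Set.Ici s).indicator (fun _ => (1 : ℝ≥0∞)) t) :=
    measurable_const.indicator (measurableSet_le measurable_fst measurable_snd)
  calc μ {ω | S ω ≤ T ω}
      = ∫⁻ ω, {ω | S ω ≤ T ω}.indicator 1 ω ∂μ :=
        (lintegral_indicator_one (measurableSet_le hS hT)).symm
    _ = ∫⁻ ω, (Set.Ici (S ω)).indicator (fun _ => 1) (T ω) ∂μ := rfl
    _ = ∫⁻ ω, μ {ω' | S ω ≤ T ω'} ∂μ := by
        rw [hST.lintegral_comp_eq_lintegral_lintegral hS hT hf]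
        simp only [lintegral_indicator_const_comp hT measurableSet_Ici, one_mul]
        rfl

theorem measurable_lintegral_comp_add {α : Type*} [MeasurableSpace α] {μ : Measure α} [SFinite μ]
    {f : ℝ → ℝ≥0∞} (hf : Measurable f) {Y : α → ℝ} (hY : Measurable Y) :
    Measurable fun s => ∫⁻ ω, f (s + Y ω) ∂μ :=
  Measurable.lintegral_prod_right (f := fun s ω => f (s + Y ω))
    (hf.comp (measurable_fst.add (hY.comp measurable_snd)))

section ArrivalTimes

variable {α : Type*} {X : ℕ → α → ℝ}

theorem arr_succ (X : ℕ → α → ℝ) (k : ℕ) (ω : α) : arr X (k + 1) ω = arr X k ω + X k ω :=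
  Finset.sum_range_succ _ k

theorem arr_nonneg (hX : ∀ n ω, 0 ≤ X n ω) (k : ℕ) (ω : α) : 0 ≤ arr X k ω :=
  Finset.sum_nonneg fun i _ => hX i ω

theorem monotone_arr (hX : ∀ n ω, 0 ≤ X n ω) (ω : α) : Monotone fun k => arr X k ω :=
  fun _ _ hjk => Finset.sum_le_sum_of_subset_of_nonneg (Finset.range_subset_range.2 hjk)
    fun i _ _ => hX i ω

theorem measurable_arr [MeasurableSpace α] (hX : ∀ n, Measurable (X n)) (k : ℕ) :
    Measurable (arr X k) :=
  Finset.measurable_sum _ fun i _ => hX i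

theorem natCast_le_countN_iff (hX : ∀ n ω, 0 ≤ X n ω) {t : ℝ} (ht : 0 ≤ t) (k : ℕ) (ω : α) :
    (k : ℕ∞) ≤ countN X t ω ↔ arr X k ω ≤ t := by
  rcases k with _ | k
  · simpa [arr] using ht
  rw [Nat.cast_succ, ENat.add_one_le_iff (ENat.natCast_ne_top k), countN, lt_sSup_iff]
  constructor
  · rintro ⟨_, ⟨m, hm, rfl⟩, hkm⟩
    exact (monotone_arr hX ω (Nat.cast_lt.1 hkm)).trans hm
  · exact fun hk => ⟨_, ⟨k + 1, hk, rfl⟩, Nat.cast_lt.2 k.lt_succ_self⟩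

variable [MeasurableSpace α] {μ : Measure α} [IsFiniteMeasure μ]

theorem lintegral_comp_arr_succ (hX : ∀ n, Measurable (X n)) (hXi : iIndepFun X μ) (k : ℕ)
    {f : ℝ → ℝ≥0∞} (hf : Measurable f) :
    ∫⁻ ω, f (arr X (k + 1) ω) ∂μ = ∫⁻ ω, ∫⁻ ω', f (arr X k ω + X k ω') ∂μ ∂μ := by
  have hindep : IndepFun (arr X k) (X k) μ := by
    have := hXi.indepFun_finsetSum_of_notMem hX (Finset.notMem_range_self (n := k))
    rwa [Finset.sum_fn] at this
  simp only [arr_succ]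
  exact hindep.lintegral_comp_eq_lintegral_lintegral (measurable_arr hX k) (hX k)
    (f := fun s x => f (s + x)) (hf.comp measurable_add)

theorem lintegral_comp_arr_add_two (hX : ∀ n, Measurable (X n)) (hXi : iIndepFun X μ) (k : ℕ)
    {f : ℝ → ℝ≥0∞} (hf : Measurable f) :
    ∫⁻ ω, f (arr X (k + 2) ω) ∂μ =
      ∫⁻ ω, ∫⁻ ω', ∫⁻ ω'', f (arr X k ω + X k ω' + X (k + 1) ω'') ∂μ ∂μ ∂μ := by
  rw [lintegral_comp_arr_succ hX hXi (k + 1) hf,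
    lintegral_comp_arr_succ hX hXi k (measurable_lintegral_comp_add hf (hX (k + 1)))]

end ArrivalTimes

section SurvivalFunction

variable {μ : Measure Ω} {T : Ω → ℝ}

theorem tendsto_measure_sub_mul_lt [IsFiniteMeasure μ] (hT : Measurable T) (a : ℝ) {c : ℝ}
    (hc : 0 < c) :
    Tendsto (fun ε => μ {ω | a - c * ε < T ω}) (𝓝[>] 0) (𝓝 (μ {ω | a ≤ T ω})) := by
  have hinter : ⋂ ε > 0, {ω | a - c * ε < T ω} = {ω | a ≤ T ω} := by
    ext ω
    simp only [Set.mem_iInter, Set.mem_ofPred_eq]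
    refine ⟨fun h => le_of_forall_pos_lt_add fun ε hε => ?_, fun h ε hε => by nlinarith⟩
    have := h (ε / c) (div_pos hε hc)
    rw [mul_div_cancel₀ _ hc.ne'] at this
    linarith
  rw [← hinter]
  exact tendsto_measure_biInter_gt (fun ε _ => (hT measurableSet_Ioi).nullMeasurableSet)
    (fun i j _ hij ω (h : a - c * i < T ω) => show a - c * j < T ω by nlinarith)
    ⟨1, one_pos, measure_ne_top μ _⟩

theorem IsDFR.measure_add_le_mul_le [IsFiniteMeasure μ] (hDFR : IsDFR μ T) (hT : Measurable T)
    {s x y : ℝ} (hs : 0 ≤ s) (hx : 0 ≤ x) (hy : 0 ≤ y) :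
    μ {ω | s + x ≤ T ω} * μ {ω | s + y ≤ T ω} ≤
      μ {ω | s ≤ T ω} * μ {ω | s + x + y ≤ T ω} := by
  rcases hx.eq_or_lt with rfl | hx
  · simp
  rcases hy.eq_or_lt with rfl | hy
  · simp [mul_comm]
  -- `IsDFR` speaks about `P(T > ·)`; `P(T ≥ a)` is its limit at `a` from the left.
  have hopen : ∀ᶠ ε in 𝓝[>] 0, μ {ω | s + y - 1 * ε < T ω} * μ {ω | s + x - 1 * ε < T ω} ≤
      μ {ω | s + x + y - 2 * ε < T ω} * μ {ω | s < T ω} := by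
    filter_upwards [Ioo_mem_nhdsGT (lt_min hx hy)] with ε ⟨_, hεxy⟩
    have := hDFR s (s + x - ε) (y - ε) hs (by linarith [min_le_left x y])
      (by linarith [min_le_right x y])
    convert this using 6 <;> ring
  have hclosed := le_of_tendsto_of_tendsto
    (ENNReal.Tendsto.mul (tendsto_measure_sub_mul_lt hT _ one_pos) (.inr (measure_ne_top _ _))
      (tendsto_measure_sub_mul_lt hT _ one_pos) (.inr (measure_ne_top _ _)))
    (ENNReal.Tendsto.mul_const (tendsto_measure_sub_mul_lt hT _ two_pos)
      (.inr (measure_ne_top _ _))) hopen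
  calc μ {ω | s + x ≤ T ω} * μ {ω | s + y ≤ T ω}
      = μ {ω | s + y ≤ T ω} * μ {ω | s + x ≤ T ω} := mul_comm _ _
    _ ≤ μ {ω | s + x + y ≤ T ω} * μ {ω | s < T ω} := hclosed
    _ ≤ μ {ω | s + x + y ≤ T ω} * μ {ω | s ≤ T ω} := by
        gcongr
        exact le_of_lt
    _ = μ {ω | s ≤ T ω} * μ {ω | s + x + y ≤ T ω} := mul_comm _ _

end SurvivalFunction

section ExponentialLaw

variable {μ : Measure Ω} [IsProbabilityMeasure μ] {X Y : Ω → ℝ} {a b : ℝ}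

theorem map_map_const_mul_eq_of_exp (ha : 0 < a) (hb : 0 < b) (hX : Measurable X)
    (hY : Measurable Y)
    (hXexp : ∀ t : ℝ, 0 ≤ t → μ {ω | t < X ω} = ENNReal.ofReal (Real.exp (-(a * t))))
    (hYexp : ∀ t : ℝ, 0 ≤ t → μ {ω | t < Y ω} = ENNReal.ofReal (Real.exp (-(b * t)))) :
    (μ.map X).map (fun x => a / b * x) = μ.map Y := by
  have hc : 0 < a / b := div_pos ha hb
  have hmul : Measurable fun x : ℝ => a / b * x := measurable_const_mul _
  have measure_eq_one : ∀ {Z : Ω → ℝ} {c : ℝ},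
      (∀ t : ℝ, 0 ≤ t → μ {ω | t < Z ω} = ENNReal.ofReal (Real.exp (-(c * t)))) →
      ∀ {s : Set Ω}, {ω | 0 < Z ω} ⊆ s → μ s = 1 := fun {Z} _ hZ s hs =>
    le_antisymm prob_le_one <| calc
      1 = μ {ω | 0 < Z ω} := by rw [hZ 0 le_rfl]; simp
      _ ≤ μ s := measure_mono hs
  refine ext_of_generate_finite _ (borel_eq_generateFrom_Ioi ℝ) isPiSystem_Ioi ?_ (by
    rw [Measure.map_apply hmul .univ, Set.preimage_univ, Measure.map_apply hX .univ,
      Measure.map_apply hY .univ]; rfl)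
  rintro _ ⟨r, rfl⟩
  rw [Measure.map_apply hmul measurableSet_Ioi, Measure.map_apply hX (hmul measurableSet_Ioi),
    Measure.map_apply hY measurableSet_Ioi]
  rcases le_or_gt 0 r with hr | hr
  · have hpre : (fun x => a / b * x) ⁻¹' Set.Ioi r = Set.Ioi (r / (a / b)) :=
      Set.ext fun x => (div_lt_iff₀' hc).symm
    rw [hpre]
    change μ {ω | r / (a / b) < X ω} = μ {ω | r < Y ω}
    rw [hXexp _ (by positivity), hYexp r hr]
    congr 3
    field_simp
  · exact (measure_eq_one hXexp fun ω (h : 0 < X ω) => hr.trans (mul_pos hc h)).trans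
      (measure_eq_one hYexp fun ω (h : 0 < Y ω) => hr.trans h).symm

theorem lintegral_comp_add_le_of_exp (ha : 0 < a) (hab : a ≤ b) (hX : Measurable X)
    (hY : Measurable Y) (hX0 : ∀ ω, 0 ≤ X ω)
    (hXexp : ∀ t : ℝ, 0 ≤ t → μ {ω | t < X ω} = ENNReal.ofReal (Real.exp (-(a * t))))
    (hYexp : ∀ t : ℝ, 0 ≤ t → μ {ω | t < Y ω} = ENNReal.ofReal (Real.exp (-(b * t))))
    {f : ℝ → ℝ≥0∞} (hf : Antitone f) (s : ℝ) :
    ∫⁻ ω, f (s + X ω) ∂μ ≤ ∫⁻ ω, f (s + Y ω) ∂μ := by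
  have hb : 0 < b := ha.trans_le hab
  have hfs : Measurable fun y => f (s + y) := hf.measurable.comp (measurable_const_add s)
  have hmul : Measurable fun x : ℝ => a / b * x := measurable_const_mul _
  calc ∫⁻ ω, f (s + X ω) ∂μ ≤ ∫⁻ ω, f (s + a / b * X ω) ∂μ :=
        lintegral_mono fun ω => hf <| by
          gcongr
          exact mul_le_of_le_one_left (hX0 ω) ((div_le_one hb).2 hab)
    _ = ∫⁻ x, f (s + a / b * x) ∂μ.map X := (lintegral_map (hfs.comp hmul) hX).symm
    _ = ∫⁻ y, f (s + y) ∂(μ.map X).map (fun x => a / b * x) := (lintegral_map hfs hmul).symm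
    _ = ∫⁻ ω, f (s + Y ω) ∂μ := by
        rw [map_map_const_mul_eq_of_exp ha hb hX hY hXexp hYexp, lintegral_map hfs hY]

end ExponentialLaw

theorem sq_lintegral_comp_add_le {μ : Measure Ω} [SFinite μ] {H : ℝ → ℝ≥0∞} (hH : Measurable H)
    (hlogconv : ∀ s x y : ℝ, 0 ≤ s → 0 ≤ x → 0 ≤ y →
      H (s + x) * H (s + y) ≤ H s * H (s + x + y))
    {X Y : Ω → ℝ} (hX : Measurable X) (hY : Measurable Y) (hX0 : ∀ ω, 0 ≤ X ω)
    (hY0 : ∀ ω, 0 ≤ Y ω) {s : ℝ} (hs : 0 ≤ s)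
    (hXY : ∫⁻ ω, H (s + X ω) ∂μ ≤ ∫⁻ ω, H (s + Y ω) ∂μ) :
    (∫⁻ ω, H (s + X ω) ∂μ) ^ 2 ≤ H s * ∫⁻ ω, ∫⁻ ω', H (s + X ω + Y ω') ∂μ ∂μ := by
  calc (∫⁻ ω, H (s + X ω) ∂μ) ^ 2
      ≤ (∫⁻ ω, H (s + X ω) ∂μ) * ∫⁻ ω', H (s + Y ω') ∂μ := by
        rw [sq]; gcongr
    _ = ∫⁻ ω, ∫⁻ ω', H (s + X ω) * H (s + Y ω') ∂μ ∂μ :=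
        (lintegral_lintegral_mul (hH.comp (hX.const_add s)).aemeasurable
          (hH.comp (hY.const_add s)).aemeasurable).symm
    _ ≤ ∫⁻ ω, ∫⁻ ω', H s * H (s + X ω + Y ω') ∂μ ∂μ :=
        lintegral_mono fun ω => lintegral_mono fun ω' => hlogconv s _ _ hs (hX0 ω) (hY0 ω')
    _ = ∫⁻ ω, H s * ∫⁻ ω', H (s + X ω + Y ω') ∂μ ∂μ :=
        lintegral_congr fun ω => lintegral_const_mul _ (hH.comp (measurable_const.add hY))
    _ = H s * ∫⁻ ω, ∫⁻ ω', H (s + X ω + Y ω') ∂μ ∂μ :=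
        lintegral_const_mul _ ((measurable_lintegral_comp_add hH hY).comp (hX.const_add s))

/-- pure birth process. Let `X 0, X 1, …` be mutually
independent, with `X n` exponentially distributed with rate `l n > 0`
(characterized by the survival function `P(X n > t) = exp (-(l n) t)` for
`t ≥ 0`), where `l` is increasing, and let `N` be the associated counting
process (a pure birth process with rates `l n`). If `T` is a DFR nonnegative
random time independent of the process, then `N(T)` is d-DFR. -/
theorem stmt6
    (μ : Measure Ω) [IsProbabilityMeasure μ]
    (X : ℕ → Ω → ℝ) (T : Ω → ℝ) (l : ℕ → ℝ)
    (hl : ∀ n, 0 < l n) (hlmono : Monotone l)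
    (hXmeas : ∀ n, Measurable (X n)) (hXnonneg : ∀ n ω, 0 ≤ X n ω)
    (hexp : ∀ n, ∀ t : ℝ, 0 ≤ t →
      μ {ω | t < X n ω} = ENNReal.ofReal (Real.exp (-(l n * t))))
    (hiid : iIndepFun X μ)
    (hTmeas : Measurable T) (hTnonneg : ∀ ω, 0 ≤ T ω)
    (hindep : IndepFun T (fun ω n => X n ω) μ)
    (hDFR : IsDFR μ T) :
    IsdDFR μ (fun ω => countN X (T ω) ω) := by
  intro n
  set H : ℝ → ℝ≥0∞ := fun s => μ {ω | s ≤ T ω}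
  have hHanti : Antitone H := fun _ _ hst => measure_mono fun _ h => hst.trans h
  have hH : Measurable H := hHanti.measurable
  have hcount (k : ℕ) : μ {ω | (k : ℕ∞) ≤ countN X (T ω) ω} = ∫⁻ ω, H (arr X k ω) ∂μ := by
    simp only [natCast_le_countN_iff hXnonneg (hTnonneg _)]
    have hST : IndepFun (arr X k) T μ :=
      (hindep.comp measurable_id (Finset.measurable_sum _ fun i _ => measurable_pi_apply i)).symm
    exact hST.measure_le_eq_lintegral (measurable_arr hXmeas k) hTmeas
  have hpoint (s : ℝ) (hs : 0 ≤ s) : (∫⁻ ω', H (s + X n ω') ∂μ) ^ 2 ≤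
      H s * ∫⁻ ω', ∫⁻ ω'', H (s + X n ω' + X (n + 1) ω'') ∂μ ∂μ :=
    sq_lintegral_comp_add_le hH (fun _ _ _ => hDFR.measure_add_le_mul_le hTmeas) (hXmeas n)
      (hXmeas (n + 1)) (hXnonneg n) (hXnonneg (n + 1)) hs
      (lintegral_comp_add_le_of_exp (hl n) (hlmono n.le_succ) (hXmeas n) (hXmeas (n + 1))
        (hXnonneg n) (hexp n) (hexp (n + 1)) hHanti s)
  rw [show (n : ℕ∞) + 1 = (n + 1 : ℕ) by norm_cast, show (n : ℕ∞) + 2 = (n + 2 : ℕ) by norm_cast,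
    hcount, hcount, hcount, lintegral_comp_arr_succ hXmeas hiid n hH,
    lintegral_comp_arr_add_two hXmeas hiid n hH]
  have hC : Measurable fun s => ∫⁻ ω', ∫⁻ ω'', H (s + X n ω' + X (n + 1) ω'') ∂μ ∂μ :=
    measurable_lintegral_comp_add (measurable_lintegral_comp_add hH (hXmeas (n + 1))) (hXmeas n)
  exact lintegral_sq_le_mul_of_sq_le (hH.comp (measurable_arr hXmeas n)).aemeasurable
    (hC.comp (measurable_arr hXmeas n)).aemeasurable
    (ae_of_all _ fun ω => hpoint _ (arr_nonneg hXnonneg n ω))
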